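/- Let C be a category and A, B objects of C. If L₁ ⊆ (A ⟶ B) and L₂ ⊆ (A ⟶ B) are regular languages of arrows in C, then their intersection L₁ ∩ L₂ ⊆ (A ⟶ B) is a regular language of arrows in C. -/

import Mathlib

open CategoryTheory

universe vq uq vc uc v₁ u₁ v₂ u₂ v₃ u₃ v u v' u'

/-- A functor `p : D ⥤ C` has the unique lifting of factorizations property (is ULF) if
every factorization of the image of a morphism lifts uniquely. -/
def IsULF {D : Type u} {C : Type u'} [Category.{v} D] [Category.{v'} C] (p : D ⥤ C) : Prop :=
  ∀ ⦃X Y : D⦄ (α : X ⟶ Y) ⦃B : C⦄ (u : p.obj X ⟶ B) (v : B ⟶ p.obj Y),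
    p.map α = u ≫ v →
    ∃! t : Σ (Z : D), (X ⟶ Z) × (Z ⟶ Y),
      ∃ e : p.obj t.1 = B,
        t.2.1 ≫ t.2.2 = α ∧ p.map t.2.1 ≫ eqToHom e = u ∧ p.map t.2.2 = eqToHom e ≫ v

/-- A functor `p : D ⥤ C` is finitary if its fibers over objects and over morphisms
are all finite. -/
def IsFinitary {D : Type u} {C : Type u'} [Category.{v} D] [Category.{v'} C]
    (p : D ⥤ C) : Prop :=
  (∀ A : C, { X : D | p.obj X = A }.Finite) ∧
    ∀ (A B : C) (w : A ⟶ B),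
      { t : Σ (X : D) (Y : D), X ⟶ Y |
        ∃ (hX : p.obj t.1 = A) (hY : p.obj t.2.1 = B),
          p.map t.2.2 = eqToHom hX ≫ w ≫ eqToHom hY.symm }.Finite

/-- A language of arrows `L ⊆ C(A,B)` is regular if it is the language recognized by a
nondeterministic finite-state automaton over `C`, i.e. a finitary ULF functor `p : Q ⥤ C`
with chosen initial and accepting states lying over `A` and `B`. -/
def IsRegularLang.{w₁, w₂, w₃, w₄} {C : Type w₄} [Category.{w₃} C] {A B : C}
    (L : Set (A ⟶ B)) : Prop :=
  ∃ (Q : Type w₂) (_ : Category.{w₁} Q) (p : Q ⥤ C) (q₀ qf : Q)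
    (h₀ : p.obj q₀ = A) (hf : p.obj qf = B),
    IsULF p ∧ IsFinitary p ∧
    L = { w : A ⟶ B | ∃ α : q₀ ⟶ qf, p.map α = eqToHom h₀ ≫ w ≫ eqToHom hf.symm }

/-!
The intersection is recognized by the product automaton: the strict pullback `Q₁ ×_C Q₂` of the
two automata, whose states are pairs of states over the same object of `C` and whose transitions
are pairs of transitions over the same arrow. A factorization in `C` lifts uniquely along each
`pᵢ`, and the two lifts pair up into the unique lift in the pullback, so the pullback is ULF; its
fibers inject into products of fibers of `p₁` and `p₂`, so it is finitary; and its runs from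
`(q₀, q₀')` to `(q_f, q_f')` over an arrow `w` are exactly pairs of accepting runs over `w`.
-/

namespace CategoryTheory

section Lifts

variable {D : Type u} {C : Type u'} [Category.{v} D] [Category.{v'} C]

/-- The condition under `∃!` in `IsULF`, which therefore unfolds to
`∃! t, IsLiftOfFactorization p α u v t`. -/
def IsLiftOfFactorization (p : D ⥤ C) {X Y : D} (α : X ⟶ Y) {B : C} (u : p.obj X ⟶ B)
    (v : B ⟶ p.obj Y) (t : Σ Z : D, (X ⟶ Z) × (Z ⟶ Y)) : Prop :=
  ∃ e : p.obj t.1 = B,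
    t.2.1 ≫ t.2.2 = α ∧ p.map t.2.1 ≫ eqToHom e = u ∧ p.map t.2.2 = eqToHom e ≫ v

end Lifts

variable {C : Type u₁} [Category.{v₁} C] {Q₁ : Type uq} [Category.{vq} Q₁]
  {Q₂ : Type u₂} [Category.{v₂} Q₂]

@[ext]
structure StrictPullback (p₁ : Q₁ ⥤ C) (p₂ : Q₂ ⥤ C) where
  fst : Q₁
  snd : Q₂
  w : p₁.obj fst = p₂.obj snd

namespace StrictPullback

variable {p₁ : Q₁ ⥤ C} {p₂ : Q₂ ⥤ C}

@[ext]
structure Hom (a b : StrictPullback p₁ p₂) where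
  fst : a.fst ⟶ b.fst
  snd : a.snd ⟶ b.snd
  w : p₁.map fst ≫ eqToHom b.w = eqToHom a.w ≫ p₂.map snd

instance : Category (StrictPullback p₁ p₂) where
  Hom := Hom
  id a := ⟨𝟙 _, 𝟙 _, by simp⟩
  comp f g := ⟨f.fst ≫ g.fst, f.snd ≫ g.snd, by
    rw [Functor.map_comp, Functor.map_comp, Category.assoc, g.w, ← Category.assoc, f.w,
      Category.assoc]⟩

theorem hom_ext {a b : StrictPullback p₁ p₂} {f g : a ⟶ b} (h₁ : f.fst = g.fst)
    (h₂ : f.snd = g.snd) : f = g :=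
  Hom.ext h₁ h₂

theorem map_snd {a b : StrictPullback p₁ p₂} (f : a ⟶ b) :
    p₂.map f.snd = eqToHom a.w.symm ≫ p₁.map f.fst ≫ eqToHom b.w := by
  simp [Hom.w]

-- reducible, so that `eqToHom` lemmas see `(π p₁ p₂).obj a` as `p₁.obj a.fst`
variable (p₁ p₂) in
abbrev π : StrictPullback p₁ p₂ ⥤ C where
  obj a := p₁.obj a.fst
  map f := p₁.map f.fst
  map_id a := p₁.map_id a.fst
  map_comp f g := p₁.map_comp f.fst g.fst

section ULF

variable {X Y : StrictPullback p₁ p₂}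

def tripleFst (t : Σ Z, (X ⟶ Z) × (Z ⟶ Y)) : Σ Z, (X.fst ⟶ Z) × (Z ⟶ Y.fst) :=
  ⟨t.1.fst, t.2.1.fst, t.2.2.fst⟩

def tripleSnd (t : Σ Z, (X ⟶ Z) × (Z ⟶ Y)) : Σ Z, (X.snd ⟶ Z) × (Z ⟶ Y.snd) :=
  ⟨t.1.snd, t.2.1.snd, t.2.2.snd⟩

theorem triple_ext {t t' : Σ Z, (X ⟶ Z) × (Z ⟶ Y)} (h₁ : tripleFst t = tripleFst t')
    (h₂ : tripleSnd t = tripleSnd t') : t = t' := by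
  obtain ⟨⟨Z₁, Z₂, _⟩, β, γ⟩ := t
  obtain ⟨⟨Z₁', Z₂', _⟩, β', γ'⟩ := t'
  simp only [tripleFst, tripleSnd, Sigma.mk.inj_iff] at h₁ h₂
  obtain ⟨rfl, h₁⟩ := h₁
  obtain ⟨rfl, h₂⟩ := h₂
  simp only [heq_eq_eq, Prod.mk.injEq] at h₁ h₂
  rw [hom_ext h₁.1 h₂.1, hom_ext h₁.2 h₂.2]

variable {α : X ⟶ Y} {B : C} {u : p₁.obj X.fst ⟶ B} {v : B ⟶ p₁.obj Y.fst}

theorem isLiftOfFactorization_tripleFst {t : Σ Z, (X ⟶ Z) × (Z ⟶ Y)}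
    (ht : IsLiftOfFactorization (π p₁ p₂) α u v t) :
    IsLiftOfFactorization p₁ α.fst u v (tripleFst t) := by
  obtain ⟨e, hα, hu, hv⟩ := ht
  exact ⟨e, congrArg Hom.fst hα, hu, hv⟩

theorem isLiftOfFactorization_tripleSnd {t : Σ Z, (X ⟶ Z) × (Z ⟶ Y)}
    (ht : IsLiftOfFactorization (π p₁ p₂) α u v t) :
    IsLiftOfFactorization p₂ α.snd (eqToHom X.w.symm ≫ u) (v ≫ eqToHom Y.w) (tripleSnd t) := by
  obtain ⟨Z, β, γ⟩ := t
  obtain ⟨e, hα, rfl, hv : p₁.map γ.fst = eqToHom e ≫ v⟩ := ht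
  refine ⟨Z.w.symm.trans e, congrArg Hom.snd hα, ?_, ?_⟩
  · simp [tripleSnd, map_snd]
  · simp [tripleSnd, map_snd, hv]

theorem exists_isLiftOfFactorization {s₁ : Σ Z, (X.fst ⟶ Z) × (Z ⟶ Y.fst)}
    {s₂ : Σ Z, (X.snd ⟶ Z) × (Z ⟶ Y.snd)}
    (hs₁ : IsLiftOfFactorization p₁ α.fst u v s₁)
    (hs₂ : IsLiftOfFactorization p₂ α.snd (eqToHom X.w.symm ≫ u) (v ≫ eqToHom Y.w) s₂) :
    ∃ t, IsLiftOfFactorization (π p₁ p₂) α u v t := by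
  obtain ⟨Z₁, β₁, γ₁⟩ := s₁
  obtain ⟨Z₂, β₂, γ₂⟩ := s₂
  obtain ⟨e₁, hα₁, hu₁, hv₁⟩ := hs₁
  obtain ⟨e₂, hα₂, hu₂, hv₂⟩ := hs₂
  let Z : StrictPullback p₁ p₂ := ⟨Z₁, Z₂, e₁.trans e₂.symm⟩
  rw [comp_eqToHom_iff] at hu₂
  let β : X ⟶ Z := ⟨β₁, β₂, by simp [hu₂, ← hu₁]⟩
  let γ : Z ⟶ Y := ⟨γ₁, γ₂, by simp [hv₁, hv₂]⟩
  exact ⟨⟨Z, β, γ⟩, e₁, hom_ext hα₁ hα₂, hu₁, hv₁⟩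

end ULF

theorem isULF_π (h₁ : IsULF p₁) (h₂ : IsULF p₂) : IsULF (π p₁ p₂) := by
  intro X Y α B u v hα
  have hα₂ : p₂.map α.snd = (eqToHom X.w.symm ≫ u) ≫ v ≫ eqToHom Y.w := by
    simp [map_snd, show p₁.map α.fst = u ≫ v from hα]
  obtain ⟨s₁, hs₁, -⟩ := h₁ α.fst u v hα
  obtain ⟨s₂, hs₂, -⟩ := h₂ α.snd _ _ hα₂
  obtain ⟨t, ht⟩ := exists_isLiftOfFactorization hs₁ hs₂
  refine ⟨t, ht, fun t' ht' => triple_ext ?_ ?_⟩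
  · exact (h₁ α.fst u v hα).unique
      (isLiftOfFactorization_tripleFst ht') (isLiftOfFactorization_tripleFst ht)
  · exact (h₂ α.snd _ _ hα₂).unique
      (isLiftOfFactorization_tripleSnd ht') (isLiftOfFactorization_tripleSnd ht)

def arrowPair (t : Σ a b : StrictPullback p₁ p₂, a ⟶ b) :
    (Σ x y : Q₁, x ⟶ y) × (Σ x y : Q₂, x ⟶ y) :=
  (⟨t.1.fst, t.2.1.fst, t.2.2.fst⟩, ⟨t.1.snd, t.2.1.snd, t.2.2.snd⟩)

theorem arrowPair_injective : Function.Injective (arrowPair (p₁ := p₁) (p₂ := p₂)) := by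
  rintro ⟨⟨a₁, a₂, _⟩, ⟨b₁, b₂, _⟩, f⟩ ⟨⟨a₁', a₂', _⟩, ⟨b₁', b₂', _⟩, f'⟩ h
  simp only [arrowPair, Prod.mk.injEq, Sigma.mk.inj_iff] at h
  obtain ⟨⟨rfl, h₁⟩, rfl, h₂⟩ := h
  obtain ⟨rfl, h₁⟩ := Sigma.mk.inj_iff.1 (eq_of_heq h₁)
  obtain ⟨rfl, h₂⟩ := Sigma.mk.inj_iff.1 (eq_of_heq h₂)
  rw [hom_ext (eq_of_heq h₁) (eq_of_heq h₂)]

theorem map_snd_eq_of_map_fst_eq {a b : StrictPullback p₁ p₂} {A B : C}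
    (ha : p₁.obj a.fst = A) (hb : p₁.obj b.fst = B) {w : A ⟶ B} {f : a ⟶ b}
    (hf : p₁.map f.fst = eqToHom ha ≫ w ≫ eqToHom hb.symm) :
    p₂.map f.snd = eqToHom (a.w.symm.trans ha) ≫ w ≫ eqToHom (b.w.symm.trans hb).symm := by
  simp [map_snd, hf]

theorem isFinitary_π (h₁ : IsFinitary p₁) (h₂ : IsFinitary p₂) : IsFinitary (π p₁ p₂) := by
  constructor
  · intro A
    refine Set.Finite.of_finite_image (f := fun a => (a.fst, a.snd)) ?_
      fun a _ b _ h => StrictPullback.ext_iff.2 (Prod.ext_iff.1 h)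
    refine ((h₁.1 A).prod (h₂.1 A)).subset ?_
    rintro _ ⟨a, ha, rfl⟩
    exact ⟨ha, a.w.symm.trans ha⟩
  · intro A B w
    refine Set.Finite.of_finite_image ?_ arrowPair_injective.injOn
    refine ((h₁.2 A B w).prod (h₂.2 A B w)).subset ?_
    rintro _ ⟨⟨a, b, f⟩,
      ⟨ha : p₁.obj a.fst = A, hb : p₁.obj b.fst = B, hf : p₁.map f.fst = _⟩, rfl⟩
    exact ⟨⟨ha, hb, hf⟩, a.w.symm.trans ha, b.w.symm.trans hb,
      map_snd_eq_of_map_fst_eq ha hb hf⟩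

theorem exists_π_map_iff {a b : StrictPullback p₁ p₂} {A B : C} (ha : p₁.obj a.fst = A)
    (hb : p₁.obj b.fst = B) (w : A ⟶ B) :
    (∃ f : a ⟶ b, (π p₁ p₂).map f = eqToHom ha ≫ w ≫ eqToHom hb.symm) ↔
      (∃ f₁ : a.fst ⟶ b.fst, p₁.map f₁ = eqToHom ha ≫ w ≫ eqToHom hb.symm) ∧
      ∃ f₂ : a.snd ⟶ b.snd, p₂.map f₂ =
        eqToHom (a.w.symm.trans ha) ≫ w ≫ eqToHom (b.w.symm.trans hb).symm := by
  constructor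
  · rintro ⟨f, hf : p₁.map f.fst = _⟩
    exact ⟨⟨f.fst, hf⟩, f.snd, map_snd_eq_of_map_fst_eq ha hb hf⟩
  · rintro ⟨⟨f₁, hf₁⟩, f₂, hf₂⟩
    exact ⟨⟨f₁, f₂, by simp [hf₁, hf₂]⟩, hf₁⟩

end StrictPullback
end CategoryTheory

/-- Regular languages of arrows are closed under intersection. -/
theorem isRegularLang_inter {C : Type u₁} [Category.{v₁} C] {A B : C}
    (L₁ L₂ : Set (A ⟶ B))
    (h₁ : IsRegularLang.{vq, uq} L₁) (h₂ : IsRegularLang.{v₂, u₂} L₂) :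
    IsRegularLang.{max vq v₂, max uq u₂} (L₁ ∩ L₂) := by
  obtain ⟨Q₁, _, p₁, a₀, a_f, ha₀, ha_f, ulf₁, fin₁, rfl⟩ := h₁
  obtain ⟨Q₂, _, p₂, b₀, b_f, hb₀, hb_f, ulf₂, fin₂, rfl⟩ := h₂
  refine ⟨StrictPullback p₁ p₂, inferInstance, StrictPullback.π p₁ p₂,
    ⟨a₀, b₀, ha₀.trans hb₀.symm⟩, ⟨a_f, b_f, ha_f.trans hb_f.symm⟩, ha₀, ha_f,
    StrictPullback.isULF_π ulf₁ ulf₂, StrictPullback.isFinitary_π fin₁ fin₂, ?_⟩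
  ext w
  exact (StrictPullback.exists_π_map_iff (a := ⟨a₀, b₀, _⟩) (b := ⟨a_f, b_f, _⟩)
    ha₀ ha_f w).symm
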